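/- arXiv:1203.2405 — 5 statements merged into one kernel-verified Lean document; each statement's English description precedes it below -/
import Mathlib

section
/- Let p : (0,∞) → ℝ be differentiable with (5/3)·p(Z) − Z·p′(Z) > 0 for every Z > 0 and p(Z)/Z^{5/3} → p_∞ > 0 as Z → ∞, and let a > 0. Define the total internal energy density ρ·e(ρ,θ) := (3/2)·θ^{5/2}·p(ρ θ^{−3/2}) + a·θ⁴ for ρ, θ > 0. Then with c := min((3/2)p_∞, a) > 0 one has ρ·e(ρ,θ) ≥ c·(ρ^{5/3} + θ⁴) for all ρ, θ > 0. -/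
/-!
The hypothesis `(5/3) p - Z p' > 0` makes `Z ↦ p Z / Z^(5/3)` decreasing on
`(0, ∞)`, so it stays above its limit `p_∞`: `p Z ≥ p_∞ Z^(5/3)`. At `Z = ρ θ^(-3/2)` the
factor `θ^(5/2)` cancels the `θ`-dependence, giving `θ^(5/2) p(ρ θ^(-3/2)) ≥ p_∞ ρ^(5/3)`;
adding the radiation term `a θ⁴` and bounding both coefficients by their minimum concludes.
-/

open Set Filter Topology

namespace Real

theorem hasDerivAt_div_rpow {p : ℝ → ℝ} {p' γ Z : ℝ} (hp : HasDerivAt p p' Z) (hZ : 0 < Z) :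
    HasDerivAt (fun Z => p Z / Z ^ γ) (Z ^ (-γ - 1) * (Z * p' - γ * p Z)) Z := by
  have hZγ : 0 < Z ^ γ := rpow_pos_of_pos hZ γ
  refine (hp.div (hasDerivAt_rpow_const (p := γ) (Or.inl hZ.ne')) hZγ.ne').congr_deriv ?_
  rw [rpow_sub_one hZ.ne', rpow_sub_one hZ.ne', rpow_neg hZ.le]
  field_simp

theorem antitoneOn_div_rpow {p p' : ℝ → ℝ} {γ : ℝ}
    (hp : ∀ Z, 0 < Z → HasDerivAt p (p' Z) Z) (hγ : ∀ Z, 0 < Z → Z * p' Z ≤ γ * p Z) :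
    AntitoneOn (fun Z => p Z / Z ^ γ) (Ioi 0) := by
  have hderiv Z (hZ : 0 < Z) := hasDerivAt_div_rpow (γ := γ) (hp Z hZ) hZ
  refine antitoneOn_of_deriv_nonpos (convex_Ioi 0)
    (fun Z hZ => (hderiv Z hZ).continuousAt.continuousWithinAt)
    (fun Z hZ => (hderiv Z (interior_subset hZ)).differentiableAt.differentiableWithinAt)
    fun Z hZ => ?_
  rw [interior_Ioi] at hZ
  rw [(hderiv Z hZ).deriv]
  exact mul_nonpos_of_nonneg_of_nonpos (rpow_nonneg hZ.le _) (by linarith [hγ Z hZ])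

theorem mul_rpow_le_of_antitoneOn_div_rpow {p : ℝ → ℝ} {γ L : ℝ}
    (hanti : AntitoneOn (fun Z => p Z / Z ^ γ) (Ioi 0))
    (hlim : Tendsto (fun Z => p Z / Z ^ γ) atTop (𝓝 L)) {Z : ℝ} (hZ : 0 < Z) :
    L * Z ^ γ ≤ p Z := by
  have hL : L ≤ p Z / Z ^ γ := le_of_tendsto hlim <| by
    filter_upwards [eventually_ge_atTop Z] with W hW
    exact hanti hZ (hZ.trans_le hW) hW
  rwa [le_div_iff₀ (rpow_pos_of_pos hZ γ)] at hL

theorem rpow_mul_mul_rpow_neg_rpow {ρ θ : ℝ} (hρ : 0 ≤ ρ) (hθ : 0 < θ) (β γ : ℝ) :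
    θ ^ (β * γ) * (ρ * θ ^ (-β)) ^ γ = ρ ^ γ := by
  rw [mul_rpow hρ (rpow_nonneg hθ.le _), ← rpow_mul hθ.le, mul_left_comm, ← rpow_add hθ,
    neg_mul, add_neg_cancel, rpow_zero, mul_one]

end Real

theorem internal_energy_coercive_general (p p' : ℝ → ℝ) (pinf a : ℝ)
    (hderiv : ∀ Z : ℝ, 0 < Z → HasDerivAt p (p' Z) Z)
    (hstab : ∀ Z : ℝ, 0 < Z → 0 < (5 / 3) * p Z - Z * p' Z)
    (hlim : Filter.Tendsto (fun Z : ℝ => p Z / Z ^ ((5 : ℝ) / 3)) Filter.atTop (nhds pinf)) :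
    ∀ ρ θ : ℝ, 0 < ρ → 0 < θ →
      min ((3 / 2) * pinf) a * (ρ ^ ((5 : ℝ) / 3) + θ ^ 4) ≤
        (3 / 2) * θ ^ ((5 : ℝ) / 2) * p (ρ * θ ^ (-(3 : ℝ) / 2)) + a * θ ^ 4 := by
  intro ρ θ hρ hθ
  have hanti := Real.antitoneOn_div_rpow hderiv fun Z hZ => (sub_pos.mp (hstab Z hZ)).le
  have hZ : 0 < ρ * θ ^ (-(3 : ℝ) / 2) := by positivity
  have hscale :
      θ ^ ((5 : ℝ) / 2) * (ρ * θ ^ (-(3 : ℝ) / 2)) ^ ((5 : ℝ) / 3) = ρ ^ ((5 : ℝ) / 3) := by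
    rw [← Real.rpow_mul_mul_rpow_neg_rpow hρ.le hθ (3 / 2)]
    norm_num
  have hmolecular :
      pinf * ρ ^ ((5 : ℝ) / 3) ≤ θ ^ ((5 : ℝ) / 2) * p (ρ * θ ^ (-(3 : ℝ) / 2)) := by
    rw [← hscale, mul_left_comm]
    exact mul_le_mul_of_nonneg_left (Real.mul_rpow_le_of_antitoneOn_div_rpow hanti hlim hZ)
      (by positivity)
  calc min ((3 / 2) * pinf) a * (ρ ^ ((5 : ℝ) / 3) + θ ^ 4)
      = min ((3 / 2) * pinf) a * ρ ^ ((5 : ℝ) / 3) + min ((3 / 2) * pinf) a * θ ^ 4 :=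
        mul_add _ _ _
    _ ≤ (3 / 2) * pinf * ρ ^ ((5 : ℝ) / 3) + a * θ ^ 4 := by
      gcongr
      exacts [min_le_left _ _, min_le_right _ _]
    _ ≤ (3 / 2) * θ ^ ((5 : ℝ) / 2) * p (ρ * θ ^ (-(3 : ℝ) / 2)) + a * θ ^ 4 := by
      linarith

/-- with `p` differentiable, `(5/3)p − Z p′ > 0`, `p(Z)/Z^(5/3) → p_∞ > 0`
and `a > 0`, the total internal energy density
`ρ·e(ρ,θ) = (3/2)·θ^(5/2)·p(ρ θ^(−3/2)) + a·θ⁴` satisfies the coercivity bound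
`ρ·e(ρ,θ) ≥ min((3/2)p_∞, a)·(ρ^(5/3) + θ⁴)` for all `ρ, θ > 0`. -/
theorem internal_energy_coercive (p p' : ℝ → ℝ) (pinf a : ℝ)
    (hderiv : ∀ Z : ℝ, 0 < Z → HasDerivAt p (p' Z) Z)
    (hstab : ∀ Z : ℝ, 0 < Z → 0 < (5 / 3) * p Z - Z * p' Z)
    (hlim : Filter.Tendsto (fun Z : ℝ => p Z / Z ^ ((5 : ℝ) / 3)) Filter.atTop (nhds pinf))
    (hpinf : 0 < pinf) (ha : 0 < a) :
    ∀ ρ θ : ℝ, 0 < ρ → 0 < θ →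
      min ((3 / 2) * pinf) a * (ρ ^ ((5 : ℝ) / 3) + θ ^ 4) ≤
        (3 / 2) * θ ^ ((5 : ℝ) / 2) * p (ρ * θ ^ (-(3 : ℝ) / 2)) + a * θ ^ 4 :=
  internal_energy_coercive_general p p' pinf a hderiv hstab hlim
end

section
/- Let p : (0,∞) → ℝ be differentiable and c > 0 a constant such that 0 < (5/3)·p(Z) − Z·p′(Z) < c·Z for every Z > 0. Let S : (0,∞) → ℝ be differentiable with S′(Z) = −(3/2)·((5/3)p(Z) − Z p′(Z))/Z² for all Z > 0 and S(Z) → 0 as Z → ∞. Then S is strictly decreasing on (0,∞), S(Z) > 0 for every Z > 0, and S(Z) ≤ S(1) + (3c/2)·max(0, −log Z) for every Z > 0. -/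
/-- with `0 < (5/3)p(Z) − Z p′(Z) < cZ` for all `Z > 0`,
`S′(Z) = −(3/2)((5/3)p(Z) − Z p′(Z))/Z²` and `S(Z) → 0` as `Z → ∞`
(the Third law), the function `S` is strictly decreasing on `(0,∞)`, positive on
`(0,∞)`, and satisfies `S(Z) ≤ S(1) + (3c/2)·max(0, −log Z)` for every `Z > 0`. -/
theorem molecular_entropy_properties (p p' S S' : ℝ → ℝ) (c : ℝ) (hc : 0 < c)
    (hp : ∀ Z : ℝ, 0 < Z → HasDerivAt p (p' Z) Z)
    (hstab : ∀ Z : ℝ, 0 < Z →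
      0 < (5 / 3) * p Z - Z * p' Z ∧ (5 / 3) * p Z - Z * p' Z < c * Z)
    (hS : ∀ Z : ℝ, 0 < Z → HasDerivAt S (S' Z) Z)
    (hS' : ∀ Z : ℝ, 0 < Z → S' Z = -(3 / 2) * ((5 / 3) * p Z - Z * p' Z) / Z ^ 2)
    (hlim : Filter.Tendsto S Filter.atTop (nhds 0)) :
    StrictAntiOn S (Set.Ioi (0 : ℝ)) ∧
      (∀ Z : ℝ, 0 < Z → 0 < S Z) ∧
      (∀ Z : ℝ, 0 < Z → S Z ≤ S 1 + (3 * c / 2) * max 0 (-Real.log Z)) := by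
  have hanti : StrictAntiOn S (Set.Ioi (0 : ℝ)) := by
    apply StrictAntiOn.mono (s := Set.Ioi (0:ℝ)) ?_ le_rfl
    apply strictAntiOn_of_deriv_neg (convex_Ioi 0)
    · exact fun x hx => (hS x hx).differentiableAt.continuousAt.continuousWithinAt
    · intro x hx
      rw [interior_Ioi] at hx
      have hxp : (0:ℝ) < x := hx
      rw [(hS x hx).deriv, hS' x hx]
      have hN := (hstab x hx).1
      have : -(3 / 2) * ((5 / 3) * p x - x * p' x) < 0 := by nlinarith
      exact div_neg_of_neg_of_pos this (by positivity)
  have hpos : ∀ Z : ℝ, 0 < Z → 0 < S Z := by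
    intro Z hZ
    have h1 : (0:ℝ) ≤ S (Z + 1) := by
      apply le_of_tendsto hlim
      filter_upwards [Filter.eventually_ge_atTop (Z + 1)] with W hW
      rcases eq_or_lt_of_le hW with h | h
      · exact le_of_eq (by rw [h])
      · exact (hanti (show (Z+1:ℝ) ∈ Set.Ioi 0 from Set.mem_Ioi.2 (by linarith))
          (show W ∈ Set.Ioi 0 from Set.mem_Ioi.2 (by linarith)) h).le
    have h2 : S (Z + 1) < S Z := hanti (Set.mem_Ioi.2 hZ)
      (Set.mem_Ioi.2 (by linarith : (0:ℝ) < Z + 1)) (by linarith)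
    linarith
  refine ⟨hanti, hpos, ?_⟩
  -- g = S + (3c/2) log is strictly monotone
  have hg : StrictMonoOn (fun Z => S Z + (3 * c / 2) * Real.log Z) (Set.Ioi (0:ℝ)) := by
    apply strictMonoOn_of_deriv_pos (convex_Ioi 0)
    · intro x hx
      exact ((hS x hx).differentiableAt.continuousAt.add
        ((Real.continuousAt_log (ne_of_gt hx)).const_smul (3 * c / 2))).continuousWithinAt
    · intro x hx
      rw [interior_Ioi] at hx
      have hd : HasDerivAt (fun Z => S Z + (3 * c / 2) * Real.log Z)
          (S' x + (3 * c / 2) * x⁻¹) x :=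
        (hS x hx).add (((Real.hasDerivAt_log (ne_of_gt hx))).const_mul (3 * c / 2))
      have hxp : (0:ℝ) < x := hx
      rw [hd.deriv, hS' x hx]
      obtain ⟨hN, hNc⟩ := hstab x hx
      have key : -(3 / 2) * ((5 / 3) * p x - x * p' x) / x ^ 2 + (3 * c / 2) * x⁻¹
          = (3 / 2) * (c * x - ((5 / 3) * p x - x * p' x)) / x ^ 2 := by
        field_simp
        ring
      rw [key]
      have : 0 < c * x - ((5 / 3) * p x - x * p' x) := by linarith
      positivity
  intro Z hZ
  rcases le_or_gt 1 Z with h | h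
  · have hmax : max 0 (-Real.log Z) = 0 := by
      simp [neg_nonpos.2 (Real.log_nonneg h)]
    rw [hmax, mul_zero, add_zero]
    rcases eq_or_lt_of_le h with h1 | h1
    · rw [h1]
    · exact (hanti (Set.mem_Ioi.2 one_pos) (Set.mem_Ioi.2 hZ) h1).le
  · have hmax : max 0 (-Real.log Z) = -Real.log Z := by
      have := Real.log_neg hZ h
      rw [max_eq_right (by linarith)]
    rw [hmax]
    have := hg (Set.mem_Ioi.2 hZ) (Set.mem_Ioi.2 one_pos) h
    simp only [Real.log_one, mul_zero, add_zero] at this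
    linarith
end

section
/- Let p : (0,∞) → ℝ be differentiable and c > 0 a constant with 0 < (5/3)·p(Z) − Z·p′(Z) < c·Z for all Z > 0; let S : (0,∞) → ℝ be differentiable with S′(Z) = −(3/2)·((5/3)p(Z) − Z p′(Z))/Z² and S(Z) → 0 as Z → ∞; let a > 0 and define s(ρ,θ) := S(ρθ^{−3/2}) + (4a/3)θ³/ρ for ρ, θ > 0. Then for every compact set K = [ρ₀′,ρ₁′] × [θ₀′,θ₁′] ⊂ (0,∞)² there exists a constant c̃ > 0 such that ρ·|s(ρ,θ) − s(ρ′,θ′)| ≤ c̃·(ρ + ρ·max(0, log θ) + ρ·|log ρ| + θ³) for all ρ, θ > 0 and all (ρ′,θ′) ∈ K. -/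
/-!
`S` is decreasing with limit `0` at infinity, hence nonnegative, so both entropies are
nonnegative and `ρ |s(ρ,θ) - s(ρ',θ')| ≤ ρ s(ρ,θ) + ρ s(ρ',θ')`. The bound
`S' ≥ -(3c/2)/Z` makes `S + (3c/2) log` increasing, whence
`S Z ≤ S 1 + (3c/2) max 0 (-log Z)`, and `-log (ρ θ^(-3/2)) ≤ |log ρ| + (3/2) max 0 (log θ)`.
On `K` the entropy `s(ρ',θ')` is bounded by monotonicity, and `ρ` times the radiation entropy
at `(ρ,θ)` is `(4a/3) θ³`.
-/

open Real Set Filter Topology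

lemma antitoneOn_Ioi_of_hasDerivAt_nonpos {f f' : ℝ → ℝ} {a : ℝ}
    (hf : ∀ x, a < x → HasDerivAt f (f' x) x) (hf' : ∀ x, a < x → f' x ≤ 0) :
    AntitoneOn f (Ioi a) :=
  antitoneOn_of_hasDerivWithinAt_nonpos (convex_Ioi a)
    (fun x hx ↦ (hf x hx).continuousAt.continuousWithinAt)
    (fun x hx ↦ (hf x (interior_Ioi.subset hx)).hasDerivWithinAt)
    (fun x hx ↦ hf' x (interior_Ioi.subset hx))

lemma monotoneOn_Ioi_of_hasDerivAt_nonneg {f f' : ℝ → ℝ} {a : ℝ}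
    (hf : ∀ x, a < x → HasDerivAt f (f' x) x) (hf' : ∀ x, a < x → 0 ≤ f' x) :
    MonotoneOn f (Ioi a) :=
  monotoneOn_of_hasDerivWithinAt_nonneg (convex_Ioi a)
    (fun x hx ↦ (hf x hx).continuousAt.continuousWithinAt)
    (fun x hx ↦ (hf x (interior_Ioi.subset hx)).hasDerivWithinAt)
    (fun x hx ↦ hf' x (interior_Ioi.subset hx))

lemma AntitoneOn.le_of_tendsto_atTop {f : ℝ → ℝ} {a l x : ℝ} (hf : AntitoneOn f (Ioi a))
    (hlim : Tendsto f atTop (𝓝 l)) (hx : a < x) : l ≤ f x :=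
  le_of_tendsto hlim <| eventually_ge_atTop x |>.mono fun _ hy ↦ hf hx (hx.trans_le hy) hy

lemma monotoneOn_add_mul_log {f f' : ℝ → ℝ} {C : ℝ}
    (hf : ∀ x, 0 < x → HasDerivAt f (f' x) x) (hf' : ∀ x, 0 < x → -C / x ≤ f' x) :
    MonotoneOn (fun x ↦ f x + C * log x) (Ioi 0) := by
  refine monotoneOn_Ioi_of_hasDerivAt_nonneg
    (fun x hx ↦ (hf x hx).add ((hasDerivAt_log hx.ne').const_mul C)) fun x hx ↦ ?_
  have := hf' x hx
  rw [neg_div, neg_le_iff_add_nonneg] at this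
  simpa [div_eq_mul_inv] using this

lemma le_add_mul_max_zero_neg_log {f : ℝ → ℝ} {C x : ℝ} (hC : 0 ≤ C)
    (hanti : AntitoneOn f (Ioi 0)) (hmono : MonotoneOn (fun x ↦ f x + C * log x) (Ioi 0))
    (hx : 0 < x) : f x ≤ f 1 + C * max 0 (-log x) := by
  rcases le_total 1 x with h1 | h1
  · have := hanti (mem_Ioi.2 one_pos) (mem_Ioi.2 hx) h1
    nlinarith [le_max_left 0 (-log x)]
  · have := hmono (mem_Ioi.2 hx) (mem_Ioi.2 one_pos) h1
    rw [max_eq_right (neg_nonneg.2 (log_nonpos hx.le h1))]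
    simp only [log_one, mul_zero, add_zero] at this
    linarith

lemma max_zero_neg_log_mul_rpow_le {ρ θ r : ℝ} (hρ : 0 < ρ) (hθ : 0 < θ) (hr : r ≤ 0) :
    max 0 (-log (ρ * θ ^ r)) ≤ |log ρ| + -r * max 0 (log θ) := by
  rw [log_mul hρ.ne' (rpow_pos_of_pos hθ r).ne', log_rpow hθ]
  refine max_le (add_nonneg (abs_nonneg _) (mul_nonneg (neg_nonneg.2 hr) (le_max_left _ _))) ?_
  nlinarith [neg_abs_le (log ρ), le_max_left 0 (log θ), le_max_right 0 (log θ)]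

lemma mul_abs_add_div_sub_le {ρ u v A : ℝ} (hρ : 0 < ρ) (hu : 0 ≤ u) (hv : 0 ≤ v)
    (hA : 0 ≤ A) : ρ * |u + A / ρ - v| ≤ ρ * u + A + ρ * v := by
  have huA : 0 ≤ u + A / ρ := by positivity
  calc ρ * |u + A / ρ - v| ≤ ρ * (u + A / ρ + v) := by
        gcongr
        exact (abs_sub _ _).trans_eq (by rw [abs_of_nonneg huA, abs_of_nonneg hv])
    _ = ρ * u + A + ρ * v := by field_simp

lemma add_mul_four_le {a₁ a₂ a₃ a₄ x₁ x₂ x₃ x₄ : ℝ} (ha₁ : 0 ≤ a₁) (ha₂ : 0 ≤ a₂) (ha₃ : 0 ≤ a₃)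
    (ha₄ : 0 ≤ a₄) (hx₁ : 0 ≤ x₁) (hx₂ : 0 ≤ x₂) (hx₃ : 0 ≤ x₃) (hx₄ : 0 ≤ x₄) :
    a₁ * x₁ + a₂ * x₂ + a₃ * x₃ + a₄ * x₄ ≤ (a₁ + a₂ + a₃ + a₄) * (x₁ + x₂ + x₃ + x₄) := by
  have : 0 ≤ a₁ * (x₂ + x₃ + x₄) + a₂ * (x₁ + x₃ + x₄) + a₃ * (x₁ + x₂ + x₄) +
      a₄ * (x₁ + x₂ + x₃) := by positivity
  linarith

theorem entropy_difference_residual_bound_general (p p' S S' : ℝ → ℝ) (c : ℝ) (hc : 0 < c)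
    (hstab : ∀ Z : ℝ, 0 < Z →
      0 < (5 / 3) * p Z - Z * p' Z ∧ (5 / 3) * p Z - Z * p' Z < c * Z)
    (hS : ∀ Z : ℝ, 0 < Z → HasDerivAt S (S' Z) Z)
    (hS' : ∀ Z : ℝ, 0 < Z → S' Z = -(3 / 2) * ((5 / 3) * p Z - Z * p' Z) / Z ^ 2)
    (hlim : Filter.Tendsto S Filter.atTop (nhds 0))
    (a : ℝ) (ha : 0 < a)
    (ρ₀' ρ₁' θ₀' θ₁' : ℝ) (hρ₀ : 0 < ρ₀') (hθ₀ : 0 < θ₀') (hθ₁ : θ₀' ≤ θ₁') :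
    ∃ ctil : ℝ, 0 < ctil ∧
      ∀ ρ θ ρ' θ' : ℝ, 0 < ρ → 0 < θ →
        ρ' ∈ Set.Icc ρ₀' ρ₁' → θ' ∈ Set.Icc θ₀' θ₁' →
        ρ * |(S (ρ * θ ^ (-(3 : ℝ) / 2)) + (4 * a / 3) * θ ^ 3 / ρ) -
              (S (ρ' * θ' ^ (-(3 : ℝ) / 2)) + (4 * a / 3) * θ' ^ 3 / ρ')| ≤
          ctil * (ρ + ρ * max 0 (Real.log θ) + ρ * |Real.log ρ| + θ ^ 3) := by
  have hS'_nonpos : ∀ Z, 0 < Z → S' Z ≤ 0 := fun Z hZ ↦ by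
    rw [hS' Z hZ]
    exact div_nonpos_of_nonpos_of_nonneg (by nlinarith [(hstab Z hZ).1]) (by positivity)
  have hS'_ge : ∀ Z, 0 < Z → -(3 * c / 2) / Z ≤ S' Z := fun Z hZ ↦ by
    rw [hS' Z hZ, div_le_div_iff₀ hZ (by positivity)]
    nlinarith [(hstab Z hZ).2]
  have hanti := antitoneOn_Ioi_of_hasDerivAt_nonpos hS hS'_nonpos
  have hS_nonneg : ∀ Z, 0 < Z → 0 ≤ S Z := fun Z ↦ hanti.le_of_tendsto_atTop hlim
  have hS_le : ∀ Z, 0 < Z → S Z ≤ S 1 + 3 * c / 2 * max 0 (-Real.log Z) := fun Z ↦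
    le_add_mul_max_zero_neg_log (by positivity) hanti (monotoneOn_add_mul_log hS hS'_ge)
  set Zmin := ρ₀' * θ₁' ^ (-(3 : ℝ) / 2)
  set R := 4 * a / 3 * θ₁' ^ 3 / ρ₀'
  have hθ₁pos : 0 < θ₁' := hθ₀.trans_le hθ₁
  have hZmin : 0 < Zmin := by positivity
  have hcoeff : 0 ≤ S 1 + S Zmin + R := by
    linarith [hS_nonneg 1 one_pos, hS_nonneg Zmin hZmin, (by positivity : 0 ≤ R)]
  refine ⟨S 1 + S Zmin + R + 9 * c / 4 + 3 * c / 2 + 4 * a / 3, by positivity, ?_⟩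
  rintro ρ θ ρ' θ' hρ hθ ⟨hρ'₀, -⟩ ⟨hθ'₀, hθ'₁⟩
  have hρ' : 0 < ρ' := hρ₀.trans_le hρ'₀
  have hθ' : 0 < θ' := hθ₀.trans_le hθ'₀
  have hZ := hS_le _ (by positivity : 0 < ρ * θ ^ (-(3 : ℝ) / 2))
  have hZ' : S (ρ' * θ' ^ (-(3 : ℝ) / 2)) ≤ S Zmin :=
    hanti hZmin (mem_Ioi.2 (by positivity)) (mul_le_mul hρ'₀
      (rpow_le_rpow_of_nonpos hθ' hθ'₁ (by norm_num)) (by positivity) hρ'.le)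
  have hR : 4 * a / 3 * θ' ^ 3 / ρ' ≤ R := by unfold R; gcongr
  have hlog := max_zero_neg_log_mul_rpow_le hρ hθ (by norm_num : -(3 : ℝ) / 2 ≤ 0)
  calc _ ≤ ρ * S (ρ * θ ^ (-(3 : ℝ) / 2)) + 4 * a / 3 * θ ^ 3 +
          ρ * (S (ρ' * θ' ^ (-(3 : ℝ) / 2)) + 4 * a / 3 * θ' ^ 3 / ρ') :=
        mul_abs_add_div_sub_le hρ (hS_nonneg _ (by positivity))
          (add_nonneg (hS_nonneg _ (by positivity)) (by positivity)) (by positivity)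
    _ ≤ ρ * (S 1 + 3 * c / 2 * (|Real.log ρ| + -(-(3 : ℝ) / 2) * max 0 (Real.log θ))) +
          4 * a / 3 * θ ^ 3 + ρ * (S Zmin + R) := by
        gcongr
        exact hZ.trans (by gcongr)
    _ = (S 1 + S Zmin + R) * ρ + 9 * c / 4 * (ρ * max 0 (Real.log θ)) +
          3 * c / 2 * (ρ * |Real.log ρ|) + 4 * a / 3 * θ ^ 3 := by ring
    _ ≤ _ := add_mul_four_le hcoeff (by positivity) (by positivity) (by positivity)
          hρ.le (by positivity) (by positivity) (by positivity)

/-- the total entropy `s(ρ,θ) = S(ρθ^(−3/2)) + (4a/3)θ³/ρ` (molecular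
plus radiation part), where `S′(Z) = −(3/2)((5/3)p(Z) − Z p′(Z))/Z²`,
`0 < (5/3)p(Z) − Z p′(Z) < cZ` and `S(Z) → 0` at infinity, satisfies: for every
compact set `K = [ρ₀′,ρ₁′] × [θ₀′,θ₁′] ⊂ (0,∞)²` there is `ctil > 0` with
`ρ·|s(ρ,θ) − s(ρ′,θ′)| ≤ ctil·(ρ + ρ·max(0, log θ) + ρ·|log ρ| + θ³)`
for all `ρ, θ > 0` and all `(ρ′,θ′) ∈ K`. -/
theorem entropy_difference_residual_bound (p p' S S' : ℝ → ℝ) (c : ℝ) (hc : 0 < c)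
    (hp : ∀ Z : ℝ, 0 < Z → HasDerivAt p (p' Z) Z)
    (hstab : ∀ Z : ℝ, 0 < Z →
      0 < (5 / 3) * p Z - Z * p' Z ∧ (5 / 3) * p Z - Z * p' Z < c * Z)
    (hS : ∀ Z : ℝ, 0 < Z → HasDerivAt S (S' Z) Z)
    (hS' : ∀ Z : ℝ, 0 < Z → S' Z = -(3 / 2) * ((5 / 3) * p Z - Z * p' Z) / Z ^ 2)
    (hlim : Filter.Tendsto S Filter.atTop (nhds 0))
    (a : ℝ) (ha : 0 < a)
    (ρ₀' ρ₁' θ₀' θ₁' : ℝ) (hρ₀ : 0 < ρ₀') (hρ₁ : ρ₀' ≤ ρ₁') (hθ₀ : 0 < θ₀') (hθ₁ : θ₀' ≤ θ₁') :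
    ∃ ctil : ℝ, 0 < ctil ∧
      ∀ ρ θ ρ' θ' : ℝ, 0 < ρ → 0 < θ →
        ρ' ∈ Set.Icc ρ₀' ρ₁' → θ' ∈ Set.Icc θ₀' θ₁' →
        ρ * |(S (ρ * θ ^ (-(3 : ℝ) / 2)) + (4 * a / 3) * θ ^ 3 / ρ) -
              (S (ρ' * θ' ^ (-(3 : ℝ) / 2)) + (4 * a / 3) * θ' ^ 3 / ρ')| ≤
          ctil * (ρ + ρ * max 0 (Real.log θ) + ρ * |Real.log ρ| + θ ^ 3) :=
  entropy_difference_residual_bound_general p p' S S' c hc hstab hS hS' hlim a ha ρ₀' ρ₁' θ₀' θ₁'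
    hρ₀ hθ₀ hθ₁
end

section
/- Let e, s : (0,∞) × (0,∞) → ℝ be twice continuously differentiable and P : (0,∞) × (0,∞) → ℝ be continuously differentiable, satisfying the Gibbs relation ∂_θ e = θ ∂_θ s and ∂_ρ e = θ ∂_ρ s + P/ρ² and the thermodynamic stability conditions ∂_ρ P(ρ,θ) > 0 and ∂_θ e(ρ,θ) > 0 for all ρ, θ > 0. Then for every compact set K = [ρ₀′,ρ₁′] × [θ₀′,θ₁′] ⊂ (0,∞)² there exists c > 0 such that for all (ρ,θ) ∈ K and (ρ′,θ′) ∈ K: Γ(ρ,θ|ρ′,θ′) ≥ c·(|ρ − ρ′|² + |θ − θ′|²). -/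
/-- Ballistic free energy `H_C(ρ,θ) = ρ e(ρ,θ) − C ρ s(ρ,θ)`. -/
noncomputable def ballisticH (e s : ℝ × ℝ → ℝ) (C ρ θ : ℝ) : ℝ :=
  ρ * e (ρ, θ) - C * (ρ * s (ρ, θ))

/-- Relative entropy
`Γ(ρ,θ|ρ′,θ′) = H_{θ′}(ρ,θ) − ∂_ρ H_{θ′}(ρ′,θ′)·(ρ − ρ′) − H_{θ′}(ρ′,θ′)`,
where `∂_ρ H_{θ′}(ρ′,θ′)` is the derivative of `ρ ↦ H_{θ′}(ρ,θ′)` at `ρ′`. -/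
noncomputable def relEntropy (e s : ℝ × ℝ → ℝ) (ρ θ ρ' θ' : ℝ) : ℝ :=
  ballisticH e s θ' ρ θ -
    deriv (fun r : ℝ => ballisticH e s θ' r θ') ρ' * (ρ - ρ') -
    ballisticH e s θ' ρ' θ'

/-!
Write `g = e - θ' s + P / ρ` (at temperature `θ'`), so that
`Γ = [H_{θ'}(ρ,θ) - H_{θ'}(ρ,θ')] + [H_{θ'}(ρ,θ') - H_{θ'}(ρ',θ') - g(ρ')(ρ - ρ')]`.
By the Gibbs relation `∂_θ H_{θ'}(ρ,θ) = (ρ ∂_θ e / θ)(θ - θ')` and `∂_ρ g = ∂_ρ P / ρ`, and by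
stability and compactness both coefficients `ρ ∂_θ e / θ` and `∂_ρ P / ρ` are bounded below on `K`
by some `m > 0`. A function `f` with `f'(x)(x - x₀) ≥ m (x - x₀)²` lies above
`f(x₀) + m/2 (x - x₀)²`, which bounds each bracket by a quadratic.
-/

open Set

theorem DifferentiableAt.hasDerivAt_slice_fst {f : ℝ × ℝ → ℝ} {a b : ℝ}
    (hf : DifferentiableAt ℝ f (a, b)) :
    HasDerivAt (fun r => f (r, b)) (fderiv ℝ f (a, b) (1, 0)) a :=
  hf.hasFDerivAt.comp_hasDerivAt a ((hasDerivAt_id a).prodMk (hasDerivAt_const a b))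

theorem DifferentiableAt.hasDerivAt_slice_snd {f : ℝ × ℝ → ℝ} {a b : ℝ}
    (hf : DifferentiableAt ℝ f (a, b)) :
    HasDerivAt (fun t => f (a, t)) (fderiv ℝ f (a, b) (0, 1)) b :=
  hf.hasFDerivAt.comp_hasDerivAt b ((hasDerivAt_const b a).prodMk (hasDerivAt_id b))

namespace Convex

variable {D : Set ℝ}

theorem le_of_hasDerivAt_mul_sub_nonneg (hD : Convex ℝ D) {g g' : ℝ → ℝ} {x₀ x : ℝ}
    (hg : ∀ y ∈ D, HasDerivAt g (g' y) y) (hg' : ∀ y ∈ D, 0 ≤ g' y * (y - x₀))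
    (hx₀ : x₀ ∈ D) (hx : x ∈ D) : g x₀ ≤ g x := by
  have hcont : ContinuousOn g D := fun y hy => (hg y hy).continuousAt.continuousWithinAt
  rcases le_total x₀ x with hle | hle
  · have hsub : Icc x₀ x ⊆ D := hD.ordConnected.out hx₀ hx
    refine monotoneOn_of_hasDerivWithinAt_nonneg (convex_Icc x₀ x) (hcont.mono hsub)
      (fun y hy => (hg y (hsub (interior_subset hy))).hasDerivWithinAt) (fun y hy => ?_)
      (left_mem_Icc.2 hle) (right_mem_Icc.2 hle) hle
    rw [interior_Icc] at hy
    exact nonneg_of_mul_nonneg_left (hg' y (hsub (Ioo_subset_Icc_self hy))) (sub_pos.2 hy.1)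
  · have hsub : Icc x x₀ ⊆ D := hD.ordConnected.out hx hx₀
    refine antitoneOn_of_hasDerivWithinAt_nonpos (convex_Icc x x₀) (hcont.mono hsub)
      (fun y hy => (hg y (hsub (interior_subset hy))).hasDerivWithinAt) (fun y hy => ?_)
      (left_mem_Icc.2 hle) (right_mem_Icc.2 hle) hle
    rw [interior_Icc] at hy
    exact nonpos_of_mul_nonneg_left (hg' y (hsub (Ioo_subset_Icc_self hy))) (sub_neg.2 hy.2)

theorem add_mul_sq_le_of_hasDerivAt (hD : Convex ℝ D) {f f' : ℝ → ℝ} {m x₀ x : ℝ}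
    (hf : ∀ y ∈ D, HasDerivAt f (f' y) y) (hf' : ∀ y ∈ D, m * (y - x₀) ^ 2 ≤ f' y * (y - x₀))
    (hx₀ : x₀ ∈ D) (hx : x ∈ D) : f x₀ + m / 2 * (x - x₀) ^ 2 ≤ f x := by
  have hgrowth := hD.le_of_hasDerivAt_mul_sub_nonneg (g := fun y => f y - m / 2 * (y - x₀) ^ 2)
    (g' := fun y => f' y - m * (y - x₀)) (fun y hy => ?_) (fun y hy => ?_) hx₀ hx
  · simp only [sub_self] at hgrowth
    linarith
  · exact ((hf y hy).sub ((((hasDerivAt_id' y).sub_const x₀).pow 2).const_mul (m / 2))).congr_deriv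
      (by ring)
  · nlinarith [hf' y hy]

theorem mul_sq_le_mul_sub_of_le_deriv (hD : Convex ℝ D) {φ φ' : ℝ → ℝ} {m x y : ℝ}
    (hφ : ∀ z ∈ D, HasDerivAt φ (φ' z) z) (hm : ∀ z ∈ D, m ≤ φ' z) (hx : x ∈ D) (hy : y ∈ D) :
    m * (x - y) ^ 2 ≤ (φ x - φ y) * (x - y) := by
  have hgrowth := hD.mul_sub_le_image_sub_of_le_deriv
    (fun z hz => (hφ z hz).continuousAt.continuousWithinAt)
    (fun z hz => (hφ z (interior_subset hz)).differentiableAt.differentiableWithinAt)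
    (fun z hz => (hφ z (interior_subset hz)).deriv ▸ hm z (interior_subset hz))
  rcases le_total x y with hle | hle
  · nlinarith [hgrowth x hx y hy hle]
  · nlinarith [hgrowth y hy x hx hle]

end Convex

noncomputable def gibbsFreeEnergy (e s P : ℝ × ℝ → ℝ) (θ ρ : ℝ) : ℝ :=
  e (ρ, θ) - θ * s (ρ, θ) + P (ρ, θ) / ρ

section Thermodynamics

variable {e s P : ℝ × ℝ → ℝ}

theorem hasDerivAt_ballisticH_fst {ρ θ : ℝ} (hρ : ρ ≠ 0) (he : DifferentiableAt ℝ e (ρ, θ))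
    (hs : DifferentiableAt ℝ s (ρ, θ))
    (gibbs : fderiv ℝ e (ρ, θ) (1, 0) = θ * fderiv ℝ s (ρ, θ) (1, 0) + P (ρ, θ) / ρ ^ 2) :
    HasDerivAt (fun r => ballisticH e s θ r θ) (gibbsFreeEnergy e s P θ ρ) ρ := by
  refine (((hasDerivAt_id' ρ).mul he.hasDerivAt_slice_fst).sub
    (((hasDerivAt_id' ρ).mul hs.hasDerivAt_slice_fst).const_mul θ)).congr_deriv ?_
  rw [gibbs, gibbsFreeEnergy]
  field_simp
  ring

theorem hasDerivAt_gibbsFreeEnergy {ρ θ : ℝ} (hρ : ρ ≠ 0) (he : DifferentiableAt ℝ e (ρ, θ))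
    (hs : DifferentiableAt ℝ s (ρ, θ)) (hP : DifferentiableAt ℝ P (ρ, θ))
    (gibbs : fderiv ℝ e (ρ, θ) (1, 0) = θ * fderiv ℝ s (ρ, θ) (1, 0) + P (ρ, θ) / ρ ^ 2) :
    HasDerivAt (gibbsFreeEnergy e s P θ) (fderiv ℝ P (ρ, θ) (1, 0) / ρ) ρ := by
  refine ((he.hasDerivAt_slice_fst.sub (hs.hasDerivAt_slice_fst.const_mul θ)).add
    (hP.hasDerivAt_slice_fst.div (hasDerivAt_id' ρ) hρ)).congr_deriv ?_
  rw [gibbs]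
  field_simp
  ring

theorem hasDerivAt_ballisticH_snd {ρ θ C : ℝ} (hθ : θ ≠ 0) (he : DifferentiableAt ℝ e (ρ, θ))
    (hs : DifferentiableAt ℝ s (ρ, θ))
    (gibbs : fderiv ℝ e (ρ, θ) (0, 1) = θ * fderiv ℝ s (ρ, θ) (0, 1)) :
    HasDerivAt (fun t => ballisticH e s C ρ t)
      (ρ * fderiv ℝ e (ρ, θ) (0, 1) / θ * (θ - C)) θ := by
  refine ((he.hasDerivAt_slice_snd.const_mul ρ).sub
    ((hs.hasDerivAt_slice_snd.const_mul ρ).const_mul C)).congr_deriv ?_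
  rw [gibbs]
  field_simp

theorem ballisticH_quadratic_growth_fst {R : Set ℝ} (hR : Convex ℝ R) (hR₀ : R ⊆ Ioi 0)
    {θ m ρ ρ' : ℝ} (he : ∀ r ∈ R, DifferentiableAt ℝ e (r, θ))
    (hs : ∀ r ∈ R, DifferentiableAt ℝ s (r, θ)) (hP : ∀ r ∈ R, DifferentiableAt ℝ P (r, θ))
    (gibbs : ∀ r ∈ R,
      fderiv ℝ e (r, θ) (1, 0) = θ * fderiv ℝ s (r, θ) (1, 0) + P (r, θ) / r ^ 2)
    (hm : ∀ r ∈ R, m ≤ fderiv ℝ P (r, θ) (1, 0) / r) (hρ : ρ ∈ R) (hρ' : ρ' ∈ R) :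
    ballisticH e s θ ρ' θ + gibbsFreeEnergy e s P θ ρ' * (ρ - ρ') + m / 2 * (ρ - ρ') ^ 2 ≤
      ballisticH e s θ ρ θ := by
  have hne : ∀ r ∈ R, r ≠ 0 := fun r hr => (hR₀ hr).ne'
  have hgrowth := hR.add_mul_sq_le_of_hasDerivAt
    (f := fun r => ballisticH e s θ r θ - gibbsFreeEnergy e s P θ ρ' * (r - ρ'))
    (fun r hr => ((hasDerivAt_ballisticH_fst (hne r hr) (he r hr) (hs r hr) (gibbs r hr)).sub
      (((hasDerivAt_id' r).sub_const ρ').const_mul _)).congr_deriv (by rw [mul_one]))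
    (fun r hr => hR.mul_sq_le_mul_sub_of_le_deriv
      (fun z hz => hasDerivAt_gibbsFreeEnergy (hne z hz) (he z hz) (hs z hz) (hP z hz) (gibbs z hz))
      hm hr hρ')
    hρ' hρ
  simp only [sub_self, mul_zero, sub_zero] at hgrowth
  linarith

theorem ballisticH_quadratic_growth_snd {T : Set ℝ} (hT : Convex ℝ T) (hT₀ : T ⊆ Ioi 0)
    {ρ m θ θ' : ℝ} (he : ∀ t ∈ T, DifferentiableAt ℝ e (ρ, t))
    (hs : ∀ t ∈ T, DifferentiableAt ℝ s (ρ, t))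
    (gibbs : ∀ t ∈ T, fderiv ℝ e (ρ, t) (0, 1) = t * fderiv ℝ s (ρ, t) (0, 1))
    (hm : ∀ t ∈ T, m ≤ ρ * fderiv ℝ e (ρ, t) (0, 1) / t) (hθ : θ ∈ T) (hθ' : θ' ∈ T) :
    ballisticH e s θ' ρ θ' + m / 2 * (θ - θ') ^ 2 ≤ ballisticH e s θ' ρ θ :=
  hT.add_mul_sq_le_of_hasDerivAt
    (fun t ht => hasDerivAt_ballisticH_snd (hT₀ ht).ne' (he t ht) (hs t ht) (gibbs t ht))
    (fun t ht => by nlinarith [hm t ht, sq_nonneg (t - θ')]) hθ' hθ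

theorem mul_sq_add_mul_sq_le_relEntropy {R T : Set ℝ} (hR : Convex ℝ R) (hT : Convex ℝ T)
    (hR₀ : R ⊆ Ioi 0) (hT₀ : T ⊆ Ioi 0) {m₁ m₂ : ℝ}
    (he : ∀ ρ ∈ R, ∀ θ ∈ T, DifferentiableAt ℝ e (ρ, θ))
    (hs : ∀ ρ ∈ R, ∀ θ ∈ T, DifferentiableAt ℝ s (ρ, θ))
    (hP : ∀ ρ ∈ R, ∀ θ ∈ T, DifferentiableAt ℝ P (ρ, θ))
    (gibbs₁ : ∀ ρ ∈ R, ∀ θ ∈ T, fderiv ℝ e (ρ, θ) (0, 1) = θ * fderiv ℝ s (ρ, θ) (0, 1))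
    (gibbs₂ : ∀ ρ ∈ R, ∀ θ ∈ T,
      fderiv ℝ e (ρ, θ) (1, 0) = θ * fderiv ℝ s (ρ, θ) (1, 0) + P (ρ, θ) / ρ ^ 2)
    (hm₁ : ∀ ρ ∈ R, ∀ θ ∈ T, m₁ ≤ fderiv ℝ P (ρ, θ) (1, 0) / ρ)
    (hm₂ : ∀ ρ ∈ R, ∀ θ ∈ T, m₂ ≤ ρ * fderiv ℝ e (ρ, θ) (0, 1) / θ)
    {ρ θ ρ' θ' : ℝ} (hρ : ρ ∈ R) (hθ : θ ∈ T) (hρ' : ρ' ∈ R) (hθ' : θ' ∈ T) :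
    m₁ / 2 * (ρ - ρ') ^ 2 + m₂ / 2 * (θ - θ') ^ 2 ≤ relEntropy e s ρ θ ρ' θ' := by
  have hfst := ballisticH_quadratic_growth_fst hR hR₀ (he · · θ' hθ') (hs · · θ' hθ')
    (hP · · θ' hθ') (gibbs₂ · · θ' hθ') (hm₁ · · θ' hθ') hρ hρ'
  have hsnd := ballisticH_quadratic_growth_snd hT hT₀ (he ρ hρ) (hs ρ hρ) (gibbs₁ ρ hρ)
    (hm₂ ρ hρ) hθ hθ'
  rw [relEntropy, (hasDerivAt_ballisticH_fst (hR₀ hρ').ne' (he ρ' hρ' θ' hθ')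
    (hs ρ' hρ' θ' hθ') (gibbs₂ ρ' hρ' θ' hθ')).deriv]
  linarith

end Thermodynamics

theorem relEntropy_quadratic_lower_bound_general (e s P : ℝ × ℝ → ℝ)
    (he : ContDiffOn ℝ 2 e (Set.Ioi (0 : ℝ) ×ˢ Set.Ioi (0 : ℝ)))
    (hs : ContDiffOn ℝ 2 s (Set.Ioi (0 : ℝ) ×ˢ Set.Ioi (0 : ℝ)))
    (hP : ContDiffOn ℝ 1 P (Set.Ioi (0 : ℝ) ×ˢ Set.Ioi (0 : ℝ)))
    (gibbs1 : ∀ ρ θ : ℝ, 0 < ρ → 0 < θ →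
      fderiv ℝ e (ρ, θ) (0, 1) = θ * fderiv ℝ s (ρ, θ) (0, 1))
    (gibbs2 : ∀ ρ θ : ℝ, 0 < ρ → 0 < θ →
      fderiv ℝ e (ρ, θ) (1, 0) = θ * fderiv ℝ s (ρ, θ) (1, 0) + P (ρ, θ) / ρ ^ 2)
    (hstabP : ∀ ρ θ : ℝ, 0 < ρ → 0 < θ → 0 < fderiv ℝ P (ρ, θ) (1, 0))
    (hstabe : ∀ ρ θ : ℝ, 0 < ρ → 0 < θ → 0 < fderiv ℝ e (ρ, θ) (0, 1))
    (ρ₀' ρ₁' θ₀' θ₁' : ℝ) (hρ₀ : 0 < ρ₀') (hθ₀ : 0 < θ₀') :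
    ∃ c : ℝ, 0 < c ∧
      ∀ ρ θ ρ' θ' : ℝ, ρ ∈ Set.Icc ρ₀' ρ₁' → θ ∈ Set.Icc θ₀' θ₁' →
        ρ' ∈ Set.Icc ρ₀' ρ₁' → θ' ∈ Set.Icc θ₀' θ₁' →
        c * (|ρ - ρ'| ^ 2 + |θ - θ'| ^ 2) ≤ relEntropy e s ρ θ ρ' θ' := by
  have hQ : IsOpen (Ioi (0 : ℝ) ×ˢ Ioi (0 : ℝ)) := isOpen_Ioi.prod isOpen_Ioi
  have hR₀ : Icc ρ₀' ρ₁' ⊆ Ioi 0 := fun ρ hρ => hρ₀.trans_le hρ.1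
  have hT₀ : Icc θ₀' θ₁' ⊆ Ioi 0 := fun θ hθ => hθ₀.trans_le hθ.1
  have hK : Icc ρ₀' ρ₁' ×ˢ Icc θ₀' θ₁' ⊆ Ioi 0 ×ˢ Ioi 0 := prod_mono hR₀ hT₀
  have hdiff {f : ℝ × ℝ → ℝ} {n : WithTop ℕ∞} (hf : ContDiffOn ℝ n f (Ioi 0 ×ˢ Ioi 0))
      (hn : n ≠ 0) : ∀ ρ ∈ Icc ρ₀' ρ₁', ∀ θ ∈ Icc θ₀' θ₁', DifferentiableAt ℝ f (ρ, θ) :=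
    fun ρ hρ θ hθ => (hf.differentiableOn hn).differentiableAt (hQ.mem_nhds (hK ⟨hρ, hθ⟩))
  obtain ⟨m₁, hm₁, hPm⟩ := (isCompact_Icc.prod isCompact_Icc).exists_forall_le' (a := 0)
    ((((hP.continuousOn_fderiv_of_isOpen hQ le_rfl).mono hK).clm_apply continuousOn_const).div
      continuousOn_fst fun x hx => (hR₀ hx.1).ne')
    fun ⟨ρ, θ⟩ ⟨hρ, hθ⟩ => div_pos (hstabP ρ θ (hR₀ hρ) (hT₀ hθ)) (hR₀ hρ)
  obtain ⟨m₂, hm₂, hem⟩ := (isCompact_Icc.prod isCompact_Icc).exists_forall_le' (a := 0)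
    ((continuousOn_fst.mul (((he.continuousOn_fderiv_of_isOpen hQ one_le_two).mono hK).clm_apply
      continuousOn_const)).div continuousOn_snd fun x hx => (hT₀ hx.2).ne')
    fun ⟨ρ, θ⟩ ⟨hρ, hθ⟩ =>
      div_pos (mul_pos (hR₀ hρ) (hstabe ρ θ (hR₀ hρ) (hT₀ hθ))) (hT₀ hθ)
  refine ⟨min m₁ m₂ / 2, by positivity, fun ρ θ ρ' θ' hρ hθ hρ' hθ' => ?_⟩
  have hbound := mul_sq_add_mul_sq_le_relEntropy (convex_Icc ρ₀' ρ₁') (convex_Icc θ₀' θ₁') hR₀ hT₀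
    (hdiff he two_ne_zero) (hdiff hs two_ne_zero) (hdiff hP one_ne_zero)
    (fun ρ hρ θ hθ => gibbs1 ρ θ (hR₀ hρ) (hT₀ hθ)) (fun ρ hρ θ hθ => gibbs2 ρ θ (hR₀ hρ) (hT₀ hθ))
    (fun ρ hρ θ hθ => hPm (ρ, θ) ⟨hρ, hθ⟩) (fun ρ hρ θ hθ => hem (ρ, θ) ⟨hρ, hθ⟩) hρ hθ hρ' hθ'
  rw [sq_abs, sq_abs]
  nlinarith [min_le_left m₁ m₂, min_le_right m₁ m₂, sq_nonneg (ρ - ρ'), sq_nonneg (θ - θ')]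

/-- under the Gibbs relation and thermodynamic stability, on every
compact set `K = [ρ₀′,ρ₁′] × [θ₀′,θ₁′] ⊂ (0,∞)²` there is `c > 0` with
`Γ(ρ,θ|ρ′,θ′) ≥ c·(|ρ − ρ′|² + |θ − θ′|²)` for all `(ρ,θ), (ρ′,θ′) ∈ K`. -/
theorem relEntropy_quadratic_lower_bound (e s P : ℝ × ℝ → ℝ)
    (he : ContDiffOn ℝ 2 e (Set.Ioi (0 : ℝ) ×ˢ Set.Ioi (0 : ℝ)))
    (hs : ContDiffOn ℝ 2 s (Set.Ioi (0 : ℝ) ×ˢ Set.Ioi (0 : ℝ)))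
    (hP : ContDiffOn ℝ 1 P (Set.Ioi (0 : ℝ) ×ˢ Set.Ioi (0 : ℝ)))
    (gibbs1 : ∀ ρ θ : ℝ, 0 < ρ → 0 < θ →
      fderiv ℝ e (ρ, θ) (0, 1) = θ * fderiv ℝ s (ρ, θ) (0, 1))
    (gibbs2 : ∀ ρ θ : ℝ, 0 < ρ → 0 < θ →
      fderiv ℝ e (ρ, θ) (1, 0) = θ * fderiv ℝ s (ρ, θ) (1, 0) + P (ρ, θ) / ρ ^ 2)
    (hstabP : ∀ ρ θ : ℝ, 0 < ρ → 0 < θ → 0 < fderiv ℝ P (ρ, θ) (1, 0))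
    (hstabe : ∀ ρ θ : ℝ, 0 < ρ → 0 < θ → 0 < fderiv ℝ e (ρ, θ) (0, 1))
    (ρ₀' ρ₁' θ₀' θ₁' : ℝ) (hρ₀ : 0 < ρ₀') (hρ₁ : ρ₀' ≤ ρ₁') (hθ₀ : 0 < θ₀') (hθ₁ : θ₀' ≤ θ₁') :
    ∃ c : ℝ, 0 < c ∧
      ∀ ρ θ ρ' θ' : ℝ, ρ ∈ Set.Icc ρ₀' ρ₁' → θ ∈ Set.Icc θ₀' θ₁' →
        ρ' ∈ Set.Icc ρ₀' ρ₁' → θ' ∈ Set.Icc θ₀' θ₁' →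
        c * (|ρ - ρ'| ^ 2 + |θ - θ'| ^ 2) ≤ relEntropy e s ρ θ ρ' θ' :=
  relEntropy_quadratic_lower_bound_general e s P he hs hP gibbs1 gibbs2 hstabP hstabe ρ₀' ρ₁' θ₀'
    θ₁' hρ₀ hθ₀
end

section
/- Let e, s : (0,∞) × (0,∞) → ℝ be twice continuously differentiable and P : (0,∞) × (0,∞) → ℝ be continuously differentiable, satisfying the Gibbs relation ∂_θ e = θ ∂_θ s and ∂_ρ e = θ ∂_ρ s + P/ρ² and the thermodynamic stability conditions ∂_ρ P(ρ,θ) > 0 and ∂_θ e(ρ,θ) > 0 for all ρ, θ > 0. Then for every compact set K = [ρ₀′,ρ₁′] × [θ₀′,θ₁′] ⊂ (0,∞)² there exists c > 0 such that for all (ρ,θ) ∈ K and (ρ′,θ′) ∈ K: |P(ρ,θ) − P(ρ′,θ′) − ∂_ρ P(ρ′,θ′)·(ρ − ρ′) − ∂_θ P(ρ′,θ′)·(θ − θ′)| ≤ c·Γ(ρ,θ|ρ′,θ′). -/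
/-! The Gibbs relations turn the derivatives of the ballistic free energy into thermodynamic
quantities: `∂_ρ H_θ'(ρ, θ')` is the Gibbs free energy `g = e − θ s + P/ρ`, whose `ρ`-derivative
is `∂_ρ P / ρ`, and `∂_θ H_θ'(ρ, θ) = ρ ∂_θ e (θ − θ') / θ`. Splitting `Γ` into a density step at
temperature `θ'` and a temperature step at density `ρ`, the stability conditions (made uniform
on `K` by compactness) bound each step below by a positive multiple of `(ρ − ρ')²`, resp.
`(θ − θ')²`. On the other side, `∇P` is Lipschitz on the convex compact `K`, so the first-order
Taylor remainder of `P` is at most a multiple of the squared distance. -/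

open Set NNReal

section RealCalculus

variable {f f' f'' : ℝ → ℝ} {a b x₀ x m : ℝ}

lemma isMinOn_of_hasDerivAt_mul_sub_nonneg (hf : ∀ y ∈ Icc a b, HasDerivAt f (f' y) y)
    (hf' : ∀ y ∈ Icc a b, 0 ≤ f' y * (y - x₀)) (hx₀ : x₀ ∈ Icc a b) :
    IsMinOn f (Icc a b) x₀ := by
  have hcont : ContinuousOn f (Icc a b) := fun y hy => (hf y hy).continuousAt.continuousWithinAt
  intro x hx
  rcases le_total x₀ x with hle | hle
  · have hsub : Icc x₀ b ⊆ Icc a b := Icc_subset_Icc_left hx₀.1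
    refine monotoneOn_of_hasDerivWithinAt_nonneg (convex_Icc x₀ b) (hcont.mono hsub)
      (fun y hy => (hf y (hsub (interior_subset hy))).hasDerivWithinAt) (fun y hy => ?_)
      ⟨le_rfl, hx₀.2⟩ ⟨hle, hx.2⟩ hle
    rw [interior_Icc] at hy
    exact nonneg_of_mul_nonneg_left (hf' y (hsub (Ioo_subset_Icc_self hy))) (sub_pos.2 hy.1)
  · have hsub : Icc a x₀ ⊆ Icc a b := Icc_subset_Icc_right hx₀.2
    refine antitoneOn_of_hasDerivWithinAt_nonpos (convex_Icc a x₀) (hcont.mono hsub)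
      (fun y hy => (hf y (hsub (interior_subset hy))).hasDerivWithinAt) (fun y hy => ?_)
      ⟨hx.1, hle⟩ ⟨hx₀.1, le_rfl⟩ hle
    rw [interior_Icc] at hy
    exact nonpos_of_mul_nonneg_left (hf' y (hsub (Ioo_subset_Icc_self hy))) (sub_neg.2 hy.2)

lemma half_mul_sq_le_sub_of_hasDerivAt (hf : ∀ y ∈ Icc a b, HasDerivAt f (f' y) y)
    (hf' : ∀ y ∈ Icc a b, m * (y - x₀) ^ 2 ≤ f' y * (y - x₀)) (hx₀ : x₀ ∈ Icc a b)
    (hx : x ∈ Icc a b) : m / 2 * (x - x₀) ^ 2 ≤ f x - f x₀ := by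
  have hmin : IsMinOn (fun y => f y - m / 2 * (y - x₀) ^ 2) (Icc a b) x₀ := by
    refine isMinOn_of_hasDerivAt_mul_sub_nonneg (f' := fun y => f' y - m * (y - x₀))
      (fun y hy => ?_) (fun y hy => by nlinarith [hf' y hy]) hx₀
    exact ((hf y hy).sub ((((hasDerivAt_id' y).sub_const x₀).pow 2).const_mul (m / 2))).congr_deriv
      (by push_cast; ring)
  have := hmin hx
  simp only [sub_self, mem_ofPred_eq] at this
  linarith

lemma mul_sq_le_sub_mul_sub_of_le_deriv (hf : ∀ y ∈ Icc a b, HasDerivAt f (f' y) y)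
    (hm : ∀ y ∈ Icc a b, m ≤ f' y) (hx₀ : x₀ ∈ Icc a b) (hx : x ∈ Icc a b) :
    m * (x - x₀) ^ 2 ≤ (f x - f x₀) * (x - x₀) := by
  have hgrowth := (convex_Icc a b).mul_sub_le_image_sub_of_le_deriv
    (fun y hy => (hf y hy).continuousAt.continuousWithinAt)
    (fun y hy => (hf y (interior_subset hy)).differentiableAt.differentiableWithinAt)
    (fun y hy => (hf y (interior_subset hy)).deriv ▸ hm y (interior_subset hy))
  rcases le_total x₀ x with hle | hle
  · nlinarith [hgrowth x₀ hx₀ x hx hle]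
  · nlinarith [hgrowth x hx x₀ hx₀ hle]

lemma half_mul_sq_le_sub_sub_mul_of_le_deriv2 (hf : ∀ y ∈ Icc a b, HasDerivAt f (f' y) y)
    (hf' : ∀ y ∈ Icc a b, HasDerivAt f' (f'' y) y) (hm : ∀ y ∈ Icc a b, m ≤ f'' y)
    (hx₀ : x₀ ∈ Icc a b) (hx : x ∈ Icc a b) :
    m / 2 * (x - x₀) ^ 2 ≤ f x - f x₀ - f' x₀ * (x - x₀) := by
  have := half_mul_sq_le_sub_of_hasDerivAt (f := fun y => f y - f' x₀ * y)
    (fun y hy => ((hf y hy).sub ((hasDerivAt_id' y).const_mul (f' x₀))).congr_deriv (by ring))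
    (fun y hy => mul_sq_le_sub_mul_sub_of_le_deriv hf' hm hx₀ hy) hx₀ hx
  linarith

end RealCalculus

section TaylorRemainder

variable {E F : Type*} [NormedAddCommGroup E] [NormedSpace ℝ E] [NormedAddCommGroup F]
  [NormedSpace ℝ F] {f : E → F} {s : Set E}

lemma Convex.norm_image_sub_sub_fderiv_le (hs : Convex ℝ s)
    (hf : ∀ z ∈ s, DifferentiableAt ℝ f z) {C : ℝ≥0} (hf' : LipschitzOnWith C (fderiv ℝ f) s)
    {x y : E} (hx : x ∈ s) (hy : y ∈ s) :
    ‖f y - f x - fderiv ℝ f x (y - x)‖ ≤ C * ‖y - x‖ ^ 2 := by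
  have hseg : segment ℝ x y ⊆ s := hs.segment_subset hx hy
  have hbound : ∀ z ∈ segment ℝ x y, ‖fderiv ℝ f z - fderiv ℝ f x‖ ≤ C * ‖y - x‖ := by
    intro z hz
    have hzx : ‖z - x‖ ≤ ‖y - x‖ := by
      rw [← dist_eq_norm, ← dist_eq_norm, dist_comm z, dist_comm y]
      linarith [dist_add_dist_of_mem_segment hz, dist_nonneg (x := z) (y := y)]
    exact (hf'.norm_sub_le (hseg hz) hx).trans (mul_le_mul_of_nonneg_left hzx C.2)
  simpa [pow_two, mul_assoc] using (convex_segment x y).norm_image_sub_le_of_norm_fderiv_le'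
    (fun z hz => hf z (hseg hz)) hbound (left_mem_segment ℝ x y) (right_mem_segment ℝ x y)

lemma ContDiffOn.exists_norm_image_sub_sub_fderiv_le {U K : Set E} (hf : ContDiffOn ℝ 2 f U)
    (hU : IsOpen U) (hKU : K ⊆ U) (hK : IsCompact K) (hKc : Convex ℝ K) :
    ∃ C : ℝ≥0, ∀ x ∈ K, ∀ y ∈ K, ‖f y - f x - fderiv ℝ f x (y - x)‖ ≤ C * ‖y - x‖ ^ 2 := by
  obtain ⟨C, hC⟩ := ((hf.fderiv_of_isOpen hU (by norm_num)).mono hKU).exists_lipschitzOnWith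
    one_ne_zero hKc hK
  exact ⟨C, fun x hx y hy => hKc.norm_image_sub_sub_fderiv_le
    (fun z hz => (hf.differentiableOn (by norm_num)).differentiableAt (hU.mem_nhds (hKU hz)))
    hC hx hy⟩

end TaylorRemainder

section PlaneMaps

variable {F : Type*} [NormedAddCommGroup F] [NormedSpace ℝ F]

lemma DifferentiableAt.hasDerivAt_fst_slice {f : ℝ × ℝ → F} {r t : ℝ}
    (hf : DifferentiableAt ℝ f (r, t)) :
    HasDerivAt (fun x => f (x, t)) (fderiv ℝ f (r, t) (1, 0)) r :=
  hf.hasFDerivAt.comp_hasDerivAt r ((hasDerivAt_id r).prodMk (hasDerivAt_const r t))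

lemma DifferentiableAt.hasDerivAt_snd_slice {f : ℝ × ℝ → F} {r t : ℝ}
    (hf : DifferentiableAt ℝ f (r, t)) :
    HasDerivAt (fun τ => f (r, τ)) (fderiv ℝ f (r, t) (0, 1)) t :=
  hf.hasFDerivAt.comp_hasDerivAt t ((hasDerivAt_const t r).prodMk (hasDerivAt_id t))

lemma ContinuousLinearMap.map_prodMk_eq (L : ℝ × ℝ →L[ℝ] F) (a b : ℝ) :
    L (a, b) = a • L (1, 0) + b • L (0, 1) := by
  rw [← map_smul, ← map_smul, ← map_add]
  simp

end PlaneMaps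

lemma Prod.norm_sq_le_fst_sq_add_snd_sq (x : ℝ × ℝ) : ‖x‖ ^ 2 ≤ x.1 ^ 2 + x.2 ^ 2 := by
  rw [Prod.norm_def, Real.norm_eq_abs, Real.norm_eq_abs]
  rcases max_cases |x.1| |x.2| with ⟨h, _⟩ | ⟨h, _⟩ <;> rw [h, sq_abs] <;> nlinarith

section Thermodynamics

variable {e s P : ℝ × ℝ → ℝ} {r t : ℝ}

noncomputable def gibbsEnergy (e s P : ℝ × ℝ → ℝ) (ρ θ : ℝ) : ℝ :=
  e (ρ, θ) - θ * s (ρ, θ) + P (ρ, θ) / ρ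

lemma hasDerivAt_ballisticH_density (he : DifferentiableAt ℝ e (r, t))
    (hs : DifferentiableAt ℝ s (r, t)) (hr : r ≠ 0)
    (gibbs : fderiv ℝ e (r, t) (1, 0) = t * fderiv ℝ s (r, t) (1, 0) + P (r, t) / r ^ 2) :
    HasDerivAt (fun x => ballisticH e s t x t) (gibbsEnergy e s P r t) r := by
  refine (((hasDerivAt_id' r).mul he.hasDerivAt_fst_slice).sub
    (((hasDerivAt_id' r).mul hs.hasDerivAt_fst_slice).const_mul t)).congr_deriv ?_
  rw [gibbsEnergy, gibbs]
  field_simp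
  ring

lemma hasDerivAt_gibbsEnergy (he : DifferentiableAt ℝ e (r, t))
    (hs : DifferentiableAt ℝ s (r, t)) (hP : DifferentiableAt ℝ P (r, t)) (hr : r ≠ 0)
    (gibbs : fderiv ℝ e (r, t) (1, 0) = t * fderiv ℝ s (r, t) (1, 0) + P (r, t) / r ^ 2) :
    HasDerivAt (fun x => gibbsEnergy e s P x t) (fderiv ℝ P (r, t) (1, 0) / r) r := by
  refine ((he.hasDerivAt_fst_slice.sub (hs.hasDerivAt_fst_slice.const_mul t)).add
    (hP.hasDerivAt_fst_slice.div (hasDerivAt_id' r) hr)).congr_deriv ?_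
  rw [gibbs]
  field_simp
  ring

lemma hasDerivAt_ballisticH_temperature (he : DifferentiableAt ℝ e (r, t))
    (hs : DifferentiableAt ℝ s (r, t)) (ht : t ≠ 0)
    (gibbs : fderiv ℝ e (r, t) (0, 1) = t * fderiv ℝ s (r, t) (0, 1)) (c : ℝ) :
    HasDerivAt (fun τ => ballisticH e s c r τ) (r * fderiv ℝ e (r, t) (0, 1) / t * (t - c)) t := by
  refine ((he.hasDerivAt_snd_slice.const_mul r).sub
    ((hs.hasDerivAt_snd_slice.const_mul r).const_mul c)).congr_deriv ?_
  rw [gibbs]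
  field_simp

lemma half_mul_sq_add_sq_le_relEntropy
    (he : ∀ ρ θ : ℝ, 0 < ρ → 0 < θ → DifferentiableAt ℝ e (ρ, θ))
    (hs : ∀ ρ θ : ℝ, 0 < ρ → 0 < θ → DifferentiableAt ℝ s (ρ, θ))
    (hP : ∀ ρ θ : ℝ, 0 < ρ → 0 < θ → DifferentiableAt ℝ P (ρ, θ))
    (gibbs1 : ∀ ρ θ : ℝ, 0 < ρ → 0 < θ →
      fderiv ℝ e (ρ, θ) (0, 1) = θ * fderiv ℝ s (ρ, θ) (0, 1))
    (gibbs2 : ∀ ρ θ : ℝ, 0 < ρ → 0 < θ →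
      fderiv ℝ e (ρ, θ) (1, 0) = θ * fderiv ℝ s (ρ, θ) (1, 0) + P (ρ, θ) / ρ ^ 2)
    {ρ₀ ρ₁ θ₀ θ₁ m : ℝ} (hρ₀ : 0 < ρ₀) (hθ₀ : 0 < θ₀)
    (hm : ∀ r ∈ Icc ρ₀ ρ₁, ∀ t ∈ Icc θ₀ θ₁,
      m ≤ fderiv ℝ P (r, t) (1, 0) / r ∧ m ≤ r * fderiv ℝ e (r, t) (0, 1) / t)
    {ρ θ ρ' θ' : ℝ} (hρ : ρ ∈ Icc ρ₀ ρ₁) (hθ : θ ∈ Icc θ₀ θ₁) (hρ' : ρ' ∈ Icc ρ₀ ρ₁)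
    (hθ' : θ' ∈ Icc θ₀ θ₁) :
    m / 2 * ((ρ - ρ') ^ 2 + (θ - θ') ^ 2) ≤ relEntropy e s ρ θ ρ' θ' := by
  have hpos : ∀ {u v}, u ∈ Icc ρ₀ ρ₁ → v ∈ Icc θ₀ θ₁ → 0 < u ∧ 0 < v :=
    fun hu hv => ⟨hρ₀.trans_le hu.1, hθ₀.trans_le hv.1⟩
  have hdensity : ∀ r ∈ Icc ρ₀ ρ₁,
      HasDerivAt (fun x => ballisticH e s θ' x θ') (gibbsEnergy e s P r θ') r := fun r hr =>
    have ⟨hr₀, ht₀⟩ := hpos hr hθ'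
    hasDerivAt_ballisticH_density (he r θ' hr₀ ht₀) (hs r θ' hr₀ ht₀) hr₀.ne'
      (gibbs2 r θ' hr₀ ht₀)
  have hρpart : m / 2 * (ρ - ρ') ^ 2 ≤ ballisticH e s θ' ρ θ' - ballisticH e s θ' ρ' θ' -
      gibbsEnergy e s P ρ' θ' * (ρ - ρ') :=
    half_mul_sq_le_sub_sub_mul_of_le_deriv2 hdensity
      (fun r hr => have ⟨hr₀, ht₀⟩ := hpos hr hθ'
        hasDerivAt_gibbsEnergy (he r θ' hr₀ ht₀) (hs r θ' hr₀ ht₀) (hP r θ' hr₀ ht₀) hr₀.ne'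
          (gibbs2 r θ' hr₀ ht₀))
      (fun r hr => (hm r hr θ' hθ').1) hρ' hρ
  have hθpart : m / 2 * (θ - θ') ^ 2 ≤ ballisticH e s θ' ρ θ - ballisticH e s θ' ρ θ' :=
    half_mul_sq_le_sub_of_hasDerivAt
      (fun t ht => have ⟨hr₀, ht₀⟩ := hpos hρ ht
        hasDerivAt_ballisticH_temperature (he ρ t hr₀ ht₀) (hs ρ t hr₀ ht₀) ht₀.ne'
          (gibbs1 ρ t hr₀ ht₀) θ')
      (fun t ht => by
        have := mul_le_mul_of_nonneg_right (hm ρ hρ t ht).2 (sq_nonneg (t - θ'))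
        linarith)
      hθ' hθ
  rw [relEntropy, (hdensity ρ' hρ').deriv]
  linarith

lemma exists_pos_uniform_stability_bound
    (he : ContDiffOn ℝ 1 e (Ioi 0 ×ˢ Ioi 0)) (hP : ContDiffOn ℝ 1 P (Ioi 0 ×ˢ Ioi 0))
    (hstabP : ∀ ρ θ : ℝ, 0 < ρ → 0 < θ → 0 < fderiv ℝ P (ρ, θ) (1, 0))
    (hstabe : ∀ ρ θ : ℝ, 0 < ρ → 0 < θ → 0 < fderiv ℝ e (ρ, θ) (0, 1))
    {K : Set (ℝ × ℝ)} (hK : IsCompact K) (hKQ : K ⊆ Ioi 0 ×ˢ Ioi 0) :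
    ∃ m, 0 < m ∧ ∀ x ∈ K, m ≤ fderiv ℝ P x (1, 0) / x.1 ∧ m ≤ x.1 * fderiv ℝ e x (0, 1) / x.2 := by
  have hfderiv {f : ℝ × ℝ → ℝ} (hf : ContDiffOn ℝ 1 f (Ioi 0 ×ˢ Ioi 0)) (v : ℝ × ℝ) :
      ContinuousOn (fun x => fderiv ℝ f x v) K :=
    ((hf.continuousOn_fderiv_of_isOpen (isOpen_Ioi.prod isOpen_Ioi) le_rfl).mono hKQ).clm_apply
      continuousOn_const
  have hcont : ContinuousOn
      (fun x : ℝ × ℝ => min (fderiv ℝ P x (1, 0) / x.1) (x.1 * fderiv ℝ e x (0, 1) / x.2)) K :=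
    ContinuousOn.inf ((hfderiv hP _).div continuousOn_fst fun x hx => (hKQ hx).1.ne')
      ((continuousOn_fst.mul (hfderiv he _)).div continuousOn_snd fun x hx => (hKQ hx).2.ne')
  obtain ⟨m, hm, hmK⟩ := hK.exists_forall_le' hcont fun x hx =>
    lt_min (div_pos (hstabP _ _ (hKQ hx).1 (hKQ hx).2) (hKQ hx).1)
      (div_pos (mul_pos (hKQ hx).1 (hstabe _ _ (hKQ hx).1 (hKQ hx).2)) (hKQ hx).2)
  exact ⟨m, hm, fun x hx => le_min_iff.1 (hmK x hx)⟩

end Thermodynamics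

theorem pressure_taylor_remainder_relEntropy_bound_general (e s P : ℝ × ℝ → ℝ)
    (he : ContDiffOn ℝ 2 e (Set.Ioi (0 : ℝ) ×ˢ Set.Ioi (0 : ℝ)))
    (hs : ContDiffOn ℝ 2 s (Set.Ioi (0 : ℝ) ×ˢ Set.Ioi (0 : ℝ)))
    (hP : ContDiffOn ℝ 2 P (Set.Ioi (0 : ℝ) ×ˢ Set.Ioi (0 : ℝ)))
    (gibbs1 : ∀ ρ θ : ℝ, 0 < ρ → 0 < θ →
      fderiv ℝ e (ρ, θ) (0, 1) = θ * fderiv ℝ s (ρ, θ) (0, 1))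
    (gibbs2 : ∀ ρ θ : ℝ, 0 < ρ → 0 < θ →
      fderiv ℝ e (ρ, θ) (1, 0) = θ * fderiv ℝ s (ρ, θ) (1, 0) + P (ρ, θ) / ρ ^ 2)
    (hstabP : ∀ ρ θ : ℝ, 0 < ρ → 0 < θ → 0 < fderiv ℝ P (ρ, θ) (1, 0))
    (hstabe : ∀ ρ θ : ℝ, 0 < ρ → 0 < θ → 0 < fderiv ℝ e (ρ, θ) (0, 1))
    (ρ₀' ρ₁' θ₀' θ₁' : ℝ) (hρ₀ : 0 < ρ₀') (hθ₀ : 0 < θ₀') :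
    ∃ c : ℝ, 0 < c ∧
      ∀ ρ θ ρ' θ' : ℝ, ρ ∈ Set.Icc ρ₀' ρ₁' → θ ∈ Set.Icc θ₀' θ₁' →
        ρ' ∈ Set.Icc ρ₀' ρ₁' → θ' ∈ Set.Icc θ₀' θ₁' →
        |P (ρ, θ) - P (ρ', θ') - fderiv ℝ P (ρ', θ') (1, 0) * (ρ - ρ') -
            fderiv ℝ P (ρ', θ') (0, 1) * (θ - θ')| ≤
          c * relEntropy e s ρ θ ρ' θ' := by
  have hQ : IsOpen (Ioi (0 : ℝ) ×ˢ Ioi (0 : ℝ)) := isOpen_Ioi.prod isOpen_Ioi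
  have hdiff {f : ℝ × ℝ → ℝ} (hf : ContDiffOn ℝ 2 f (Ioi 0 ×ˢ Ioi 0)) (ρ θ : ℝ) (hρ : 0 < ρ)
      (hθ : 0 < θ) : DifferentiableAt ℝ f (ρ, θ) :=
    (hf.differentiableOn (by norm_num)).differentiableAt (hQ.mem_nhds ⟨hρ, hθ⟩)
  set K := Icc ρ₀' ρ₁' ×ˢ Icc θ₀' θ₁'
  have hKQ : K ⊆ Ioi 0 ×ˢ Ioi 0 :=
    prod_mono (fun _ h => hρ₀.trans_le h.1) (fun _ h => hθ₀.trans_le h.1)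
  have hK : IsCompact K := isCompact_Icc.prod isCompact_Icc
  obtain ⟨m, hm, hmK⟩ := exists_pos_uniform_stability_bound (he.of_le (by norm_num))
    (hP.of_le (by norm_num)) hstabP hstabe hK hKQ
  obtain ⟨M, hM⟩ := hP.exists_norm_image_sub_sub_fderiv_le hQ hKQ hK
    ((convex_Icc _ _).prod (convex_Icc _ _))
  refine ⟨(M + 1) / (m / 2), by positivity, fun ρ θ ρ' θ' hρ hθ hρ' hθ' => ?_⟩
  have hΓ := half_mul_sq_add_sq_le_relEntropy (hdiff he) (hdiff hs) (hdiff hP) gibbs1 gibbs2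
    hρ₀ hθ₀ (fun r hr t ht => hmK (r, t) ⟨hr, ht⟩) hρ hθ hρ' hθ'
  calc _ = ‖P (ρ, θ) - P (ρ', θ') - fderiv ℝ P (ρ', θ') ((ρ, θ) - (ρ', θ'))‖ := by
        rw [Prod.mk_sub_mk, ContinuousLinearMap.map_prodMk_eq _ (ρ - ρ'), Real.norm_eq_abs,
          smul_eq_mul, smul_eq_mul]
        ring_nf
    _ ≤ M * ‖(ρ, θ) - (ρ', θ')‖ ^ 2 := hM _ ⟨hρ', hθ'⟩ _ ⟨hρ, hθ⟩
    _ ≤ (M + 1) * ((ρ - ρ') ^ 2 + (θ - θ') ^ 2) := by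
        gcongr
        · linarith
        · exact Prod.norm_sq_le_fst_sq_add_snd_sq _
    _ = (M + 1) / (m / 2) * (m / 2 * ((ρ - ρ') ^ 2 + (θ - θ') ^ 2)) := by field_simp
    _ ≤ _ := mul_le_mul_of_nonneg_left hΓ (by positivity)

/-- under the Gibbs relation and thermodynamic stability (`P` being
twice continuously differentiable), on every compact set
`K = [ρ₀′,ρ₁′] × [θ₀′,θ₁′] ⊂ (0,∞)²` there is `c > 0` controlling the first-order
Taylor remainder of `P` by the relative entropy:
`|P(ρ,θ) − P(ρ′,θ′) − ∂_ρ P(ρ′,θ′)(ρ − ρ′) − ∂_θ P(ρ′,θ′)(θ − θ′)| ≤ c·Γ(ρ,θ|ρ′,θ′)`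
for all `(ρ,θ), (ρ′,θ′) ∈ K`. -/
theorem pressure_taylor_remainder_relEntropy_bound (e s P : ℝ × ℝ → ℝ)
    (he : ContDiffOn ℝ 2 e (Set.Ioi (0 : ℝ) ×ˢ Set.Ioi (0 : ℝ)))
    (hs : ContDiffOn ℝ 2 s (Set.Ioi (0 : ℝ) ×ˢ Set.Ioi (0 : ℝ)))
    (hP : ContDiffOn ℝ 2 P (Set.Ioi (0 : ℝ) ×ˢ Set.Ioi (0 : ℝ)))
    (gibbs1 : ∀ ρ θ : ℝ, 0 < ρ → 0 < θ →
      fderiv ℝ e (ρ, θ) (0, 1) = θ * fderiv ℝ s (ρ, θ) (0, 1))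
    (gibbs2 : ∀ ρ θ : ℝ, 0 < ρ → 0 < θ →
      fderiv ℝ e (ρ, θ) (1, 0) = θ * fderiv ℝ s (ρ, θ) (1, 0) + P (ρ, θ) / ρ ^ 2)
    (hstabP : ∀ ρ θ : ℝ, 0 < ρ → 0 < θ → 0 < fderiv ℝ P (ρ, θ) (1, 0))
    (hstabe : ∀ ρ θ : ℝ, 0 < ρ → 0 < θ → 0 < fderiv ℝ e (ρ, θ) (0, 1))
    (ρ₀' ρ₁' θ₀' θ₁' : ℝ) (hρ₀ : 0 < ρ₀') (hρ₁ : ρ₀' ≤ ρ₁') (hθ₀ : 0 < θ₀') (hθ₁ : θ₀' ≤ θ₁') :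
    ∃ c : ℝ, 0 < c ∧
      ∀ ρ θ ρ' θ' : ℝ, ρ ∈ Set.Icc ρ₀' ρ₁' → θ ∈ Set.Icc θ₀' θ₁' →
        ρ' ∈ Set.Icc ρ₀' ρ₁' → θ' ∈ Set.Icc θ₀' θ₁' →
        |P (ρ, θ) - P (ρ', θ') - fderiv ℝ P (ρ', θ') (1, 0) * (ρ - ρ') -
            fderiv ℝ P (ρ', θ') (0, 1) * (θ - θ')| ≤
          c * relEntropy e s ρ θ ρ' θ' :=
  pressure_taylor_remainder_relEntropy_bound_general e s P he hs hP gibbs1 gibbs2 hstabP hstabe ρ₀'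
    ρ₁' θ₀' θ₁' hρ₀ hθ₀
end
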